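/- In the symmetric (orthogonal) case, the partial transpose Q = P^{t₁} = Σ_{i,j} τ(E_{ij}) ⊗ E_{ji} satisfies Q = Σ_{k,l∈ℤ_N} (ω^{-k}/N) A_{-k,l} ⊗ A_{-k,-l}, where τ(E_{ij}) = E_{N-1-j,N-1-i}. -/

import Mathlib

open Matrix BigOperators

/-- `ω = exp(2πi/N)`, a primitive N-th root of unity. -/
noncomputable def omegaN (N : ℕ) : ℂ := Complex.exp (2 * Real.pi * Complex.I / N)

/-- `ω^m` for `m ∈ ℤ/N` (well defined since `ω^N = 1`). -/
noncomputable def wpow (N : ℕ) (m : ZMod N) : ℂ := omegaN N ^ m.val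

/-- Matrix unit `E_{a b}` in `Mat_N(ℂ)` with indices in `ℤ/N`. -/
def EU (N : ℕ) [NeZero N] (a b : ZMod N) : Matrix (ZMod N) (ZMod N) ℂ :=
  Matrix.single a b 1

/-- Principal basis element `A_{i j} = Σ_k ω^{k i} E_{k, k+j}`. -/
noncomputable def Apr (N : ℕ) [NeZero N] (i j : ZMod N) : Matrix (ZMod N) (ZMod N) ℂ :=
  ∑ k : ZMod N, wpow N (k * i) • EU N k (k + j)

open Kronecker

/-- Anti-diagonal transpose `τ(E_{ij}) = E_{N-1-j, N-1-i}`. -/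
def tau1 (N : ℕ) (X : Matrix (ZMod N) (ZMod N) ℂ) : Matrix (ZMod N) (ZMod N) ℂ :=
  Matrix.of fun a b => X (-1 - b) (-1 - a)

/-!
Compare entries at `((a, b), (c, d))`. On the left the entry is `1` exactly when `b = -1 - a` and
`d = -1 - c`, i.e. when `a + b = c + d` and `1 + a + b = 0`. On the right, the sum over `l` forces
`l = c - a` and `a + b = c + d`, leaving `N⁻¹ ∑ₖ ω^{-k(1 + a + b)}`, which by orthogonality of the
characters of `ℤ/N` is `1` if `1 + a + b = 0` and `0` otherwise.
-/

lemma wpow_eq_stdAddChar (N : ℕ) [NeZero N] (m : ZMod N) : wpow N m = ZMod.stdAddChar m := by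
  rw [wpow, omegaN, ZMod.stdAddChar_apply, ZMod.toCircle_apply, ← Complex.exp_nat_mul]
  congr 1
  ring

lemma tau1_single (N : ℕ) (i j : ZMod N) (x : ℂ) :
    tau1 N (single i j x) = single (-1 - j) (-1 - i) x := by
  ext a b
  simp only [tau1, of_apply, single_apply]
  grind

lemma Apr_apply (N : ℕ) [NeZero N] (i j a c : ZMod N) :
    Apr N i j a c = if a + j = c then ZMod.stdAddChar (a * i) else 0 := by
  simp [Apr, Matrix.sum_apply, EU, single_apply, wpow_eq_stdAddChar, ite_and]

lemma Apr_kronecker_Apr_apply (N : ℕ) [NeZero N] (i j j' a b c d : ZMod N) :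
    (Apr N i j ⊗ₖ Apr N i j') (a, b) (c, d) =
      if a + j = c ∧ b + j' = d then ZMod.stdAddChar ((a + b) * i) else 0 := by
  rw [kroneckerMap_apply, Apr_apply, Apr_apply, add_mul, AddChar.map_add_eq_mul]
  simp only [ite_and, ite_mul, mul_ite, zero_mul, mul_zero]
  grind

lemma sum_tau1_EU_kronecker_EU_apply (N : ℕ) [NeZero N] (a b c d : ZMod N) :
    (∑ i : ZMod N, ∑ j : ZMod N, tau1 N (EU N i j) ⊗ₖ EU N j i) (a, b) (c, d) =
      if a + b = c + d ∧ 1 + a + b = 0 then 1 else 0 := by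
  simp only [EU, tau1_single, single_kronecker_single, Matrix.sum_apply, single_apply,
    Prod.mk.injEq]
  rw [Finset.sum_eq_single d (fun x _ hx => by simp [hx]) (by simp),
    Finset.sum_eq_single b (fun x _ hx => by simp [hx]) (by simp)]
  grind

lemma sum_Apr_kronecker_Apr_neg_apply (N : ℕ) [NeZero N] (i a b c d : ZMod N) :
    ∑ l : ZMod N, (Apr N i l ⊗ₖ Apr N i (-l)) (a, b) (c, d) =
      if a + b = c + d then ZMod.stdAddChar ((a + b) * i) else 0 := by
  simp only [Apr_kronecker_Apr_apply]
  rw [Finset.sum_eq_single (c - a) (by grind) (by simp)]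
  grind

lemma sum_wpow_smul_Apr_kronecker_Apr_apply (N : ℕ) [NeZero N] (a b c d : ZMod N) :
    (∑ k : ZMod N, ∑ l : ZMod N, (wpow N (-k) / N) • (Apr N (-k) l ⊗ₖ Apr N (-k) (-l)))
      (a, b) (c, d) = if a + b = c + d ∧ 1 + a + b = 0 then 1 else 0 := by
  simp only [Matrix.sum_apply, Matrix.smul_apply, smul_eq_mul, ← Finset.mul_sum,
    sum_Apr_kronecker_Apr_neg_apply, wpow_eq_stdAddChar]
  by_cases hab : a + b = c + d
  · have hchar : ∀ k : ZMod N, ZMod.stdAddChar (-k) / N * ZMod.stdAddChar ((a + b) * -k) =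
        ZMod.stdAddChar (k * -(1 + a + b)) / N := fun k => by
      rw [div_mul_eq_mul_div, ← AddChar.map_add_eq_mul]
      ring_nf
    simp only [if_pos hab, and_iff_right hab, hchar, ← Finset.sum_div,
      AddChar.sum_mulShift _ (ZMod.isPrimitive_stdAddChar N), neg_eq_zero, ZMod.card]
    split_ifs <;> simp [NeZero.ne]
  · simp [hab]

/-- In the symmetric case, the partial transpose `Q = Σ_{i,j} τ(E_{ij}) ⊗ E_{ji}` equals
`Σ_{k,l} (ω^{-k}/N) A_{-k,l} ⊗ A_{-k,-l}`. -/
theorem partial_transpose_principal_decomposition (N : ℕ) [NeZero N] :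
    ∑ i : ZMod N, ∑ j : ZMod N, tau1 N (EU N i j) ⊗ₖ EU N j i =
      ∑ k : ZMod N, ∑ l : ZMod N, (wpow N (-k) / N) • (Apr N (-k) l ⊗ₖ Apr N (-k) (-l)) := by
  ext ⟨a, b⟩ ⟨c, d⟩
  rw [sum_tau1_EU_kronecker_EU_apply, sum_wpow_smul_Apr_kronecker_Apr_apply]
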